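/- arXiv:2306.14073 — 2 statements merged into one kernel-verified Lean document; each statement's English description precedes it below -/
import Mathlib

section
/- For every integer M ≥ 1 and every integer r ≥ 2, one has Pr_P(r) ≥ Pr_N(r−1) · (min over integers k with r−1 ≤ k ≤ M·(r−1) of #{j ∈ {1,…,M} : k+j is prime}) / M. -/
open scoped Classical

/-- A tuple `η : Fin r → ℕ` (with entries thought of as lying in `{1,…,M}`) is *admissible*
if no proper partial sum `η₁ + ⋯ + η_ℓ` (for `1 ≤ ℓ < r`) is a prime number. -/
def IsAdmissible (r : ℕ) (η : Fin r → ℕ) : Prop :=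
  ∀ ℓ : ℕ, 1 ≤ ℓ → ℓ < r →
    ¬ Nat.Prime (∑ i ∈ Finset.univ.filter (fun i : Fin r => (i : ℕ) < ℓ), η i)

/-- `PrP M r = M⁻ʳ · #{admissible tuples in {1,…,M}ʳ of length r whose total sum is prime}`. -/
noncomputable def PrP (M r : ℕ) : ℝ :=
  (((Fintype.piFinset fun _ : Fin r => Finset.Icc 1 M).filter
      (fun η => IsAdmissible r η ∧ Nat.Prime (∑ i, η i))).card : ℝ) / (M : ℝ) ^ r

/-- `PrN M r = M⁻ʳ · #{admissible tuples in {1,…,M}ʳ of length r whose total sum is not prime}`. -/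
noncomputable def PrN (M r : ℕ) : ℝ :=
  (((Fintype.piFinset fun _ : Fin r => Finset.Icc 1 M).filter
      (fun η => IsAdmissible r η ∧ ¬ Nat.Prime (∑ i, η i))).card : ℝ) / (M : ℝ) ^ r

/-!
Every admissible tuple of length `r - 1` with non-prime total `k` extends, by appending a last
entry `j ∈ {1,…,M}` with `k + j` prime, to an admissible tuple of length `r` with prime total.
Since `r - 1 ≤ k ≤ M (r - 1)`, there are at least as many such `j` as the minimum in the statement,
and distinct pairs `(η, j)` give distinct extensions.
-/

open Finset

noncomputable def admissibleTuples (M r : ℕ) (P : ℕ → Prop) [DecidablePred P] :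
    Finset (Fin r → ℕ) :=
  (Fintype.piFinset fun _ : Fin r => Icc 1 M).filter fun η => IsAdmissible r η ∧ P (∑ i, η i)

lemma PrP_eq_card_div (M r : ℕ) :
    PrP M r = #(admissibleTuples M r Nat.Prime) / (M : ℝ) ^ r := rfl

lemma PrN_eq_card_div (M r : ℕ) :
    PrN M r = #(admissibleTuples M r (¬ Nat.Prime ·)) / (M : ℝ) ^ r := rfl

lemma sum_filter_lt_snoc {n ℓ : ℕ} (hℓ : ℓ ≤ n) (η : Fin n → ℕ) (j : ℕ) :
    ∑ i ∈ univ.filter (fun i : Fin (n + 1) => (i : ℕ) < ℓ), Fin.snoc η j i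
      = ∑ i ∈ univ.filter (fun i : Fin n => (i : ℕ) < ℓ), η i := by
  rw [sum_filter, sum_filter, Fin.sum_univ_castSucc]
  simp [Nat.not_lt.mpr hℓ]

lemma IsAdmissible.snoc {n : ℕ} {η : Fin n → ℕ} (hη : IsAdmissible n η)
    (hsum : ¬ (∑ i, η i).Prime) (j : ℕ) : IsAdmissible (n + 1) (Fin.snoc η j) := by
  intro ℓ hℓ hℓn
  rw [sum_filter_lt_snoc (by omega)]
  rcases (Nat.lt_succ_iff.mp hℓn).lt_or_eq with hlt | rfl
  · exact hη ℓ hℓ hlt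
  · simpa using hsum

lemma sum_mem_Icc_of_mem_piFinset {n a b : ℕ} {η : Fin n → ℕ}
    (hη : η ∈ Fintype.piFinset fun _ => Icc a b) : ∑ i, η i ∈ Icc (n * a) (n * b) := by
  simp only [Fintype.mem_piFinset, mem_Icc] at hη
  simpa using And.intro (card_nsmul_le_sum univ η a fun i _ => (hη i).1)
    (sum_le_card_nsmul univ η b fun i _ => (hη i).2)

lemma snoc_mem_admissibleTuples {M n j : ℕ} {η : Fin n → ℕ}
    (hη : η ∈ admissibleTuples M n (¬ Nat.Prime ·)) (hj : j ∈ Icc 1 M)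
    (hprime : (∑ i, η i + j).Prime) :
    Fin.snoc η j ∈ admissibleTuples M (n + 1) Nat.Prime := by
  obtain ⟨hηM, hadm, hnp⟩ := mem_filter.mp hη
  refine mem_filter.mpr ⟨?_, hadm.snoc hnp j, ?_⟩
  · exact Fin.mem_piFinset_iff_last_init.mpr ⟨by simpa using hj, by simpa [Fin.init] using hηM⟩
  · simpa [Fin.sum_univ_castSucc] using hprime

lemma card_admissibleTuples_mul_le {M n c : ℕ}
    (hc : ∀ k ∈ Icc n (M * n), c ≤ #{j ∈ Icc 1 M | (k + j).Prime}) :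
    #(admissibleTuples M n (¬ Nat.Prime ·)) * c ≤ #(admissibleTuples M (n + 1) Nat.Prime) := by
  rw [← mul_one #(admissibleTuples M (n + 1) Nat.Prime)]
  refine card_mul_le_card_mul (fun (η : Fin n → ℕ) (x : Fin (n + 1) → ℕ) => Fin.init x = η)
    (fun η hη => ?_) (fun x _ => ?_)
  · calc c ≤ #{j ∈ Icc 1 M | (∑ i, η i + j).Prime} :=
          hc _ (by simpa [mul_comm] using sum_mem_Icc_of_mem_piFinset (mem_filter.mp hη).1)
      _ = #(image (Fin.snoc η) {j ∈ Icc 1 M | (∑ i, η i + j).Prime}) :=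
          (card_image_of_injective _ (Fin.snoc_right_injective (α := fun _ => ℕ) η)).symm
      _ ≤ _ := card_le_card fun x hx => by
          obtain ⟨j, hj, rfl⟩ := mem_image.mp hx
          obtain ⟨hjM, hprime⟩ := mem_filter.mp hj
          exact (mem_bipartiteAbove _).mpr
            ⟨snoc_mem_admissibleTuples hη hjM hprime, Fin.init_snoc _ _⟩
  · exact card_le_one.mpr fun a ha b hb =>
      ((mem_bipartiteBelow _).mp ha).2.symm.trans ((mem_bipartiteBelow _).mp hb).2

/-- For M ≥ 1 and r ≥ 2: Pr_P(r) ≥ Pr_N(r−1) · (min over k with r−1 ≤ k ≤ M(r−1) of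
#{j ∈ {1,…,M} : k+j prime}) / M. -/
theorem PrP_ge_min (M : ℕ) (hM : 1 ≤ M) (r : ℕ) (hr : 2 ≤ r) :
    PrP M r ≥ PrN M (r - 1) *
      ((((Finset.Icc (r - 1) (M * (r - 1))).inf'
            (Finset.nonempty_Icc.mpr (Nat.le_mul_of_pos_left _ hM))
            (fun k => ((Finset.Icc 1 M).filter (fun j => Nat.Prime (k + j))).card) : ℕ) : ℝ)
        / (M : ℝ)) := by
  obtain ⟨n, rfl⟩ : ∃ n, r = n + 1 := ⟨r - 1, by omega⟩
  rw [Nat.add_sub_cancel, PrP_eq_card_div, PrN_eq_card_div, ge_iff_le, div_mul_div_comm,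
    ← pow_succ, ← Nat.cast_mul]
  gcongr
  exact card_admissibleTuples_mul_le fun k hk => inf'_le _ hk
end

section
/- For every integer M ≥ 1 and every integer r ≥ 2, one has Pr_N(r) ≤ Pr_N(r−1) · (max over integers k with r−1 ≤ k ≤ M·(r−1) of #{j ∈ {1,…,M} : k+j is not prime}) / M. -/
open scoped Classical

lemma sum_filter_castSucc (m ℓ : ℕ) (hℓ : ℓ ≤ m) (η : Fin (m+1) → ℕ) :
    ∑ i ∈ Finset.univ.filter (fun i : Fin (m+1) => (i : ℕ) < ℓ), η i
      = ∑ i ∈ Finset.univ.filter (fun i : Fin m => (i : ℕ) < ℓ), η i.castSucc := by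
  have h : Finset.univ.filter (fun i : Fin (m+1) => (i : ℕ) < ℓ)
      = (Finset.univ.filter (fun i : Fin m => (i : ℕ) < ℓ)).map Fin.castSuccEmb := by
    ext i
    simp only [Finset.mem_filter, Finset.mem_univ, true_and, Finset.mem_map, Fin.castSuccEmb]
    constructor
    · intro h
      exact ⟨⟨i, lt_of_lt_of_le h hℓ⟩, h, by ext; simp⟩
    · rintro ⟨j, hj, rfl⟩; simpa using hj
  rw [h, Finset.sum_map]
  rfl


/-- For M ≥ 1 and r ≥ 2: Pr_N(r) ≤ Pr_N(r−1) · (max over k with r−1 ≤ k ≤ M(r−1) of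
#{j ∈ {1,…,M} : k+j not prime}) / M. -/
theorem PrN_le_max (M : ℕ) (hM : 1 ≤ M) (r : ℕ) (hr : 2 ≤ r) :
    PrN M r ≤ PrN M (r - 1) *
      ((((Finset.Icc (r - 1) (M * (r - 1))).sup'
            (Finset.nonempty_Icc.mpr (Nat.le_mul_of_pos_left _ hM))
            (fun k => ((Finset.Icc 1 M).filter (fun j => ¬ Nat.Prime (k + j))).card) : ℕ) : ℝ)
        / (M : ℝ)) := by
  obtain ⟨m, rfl⟩ : ∃ m, r = m + 1 := ⟨r - 1, by omega⟩
  have hm : 1 ≤ m := by omega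
  simp only [Nat.add_sub_cancel]
  set T : ℕ := (Finset.Icc m (M * m)).sup'
      (Finset.nonempty_Icc.mpr (Nat.le_mul_of_pos_left _ hM))
      (fun k => ((Finset.Icc 1 M).filter (fun j => ¬ Nat.Prime (k + j))).card) with hT
  set S := fun (n : ℕ) => (Fintype.piFinset fun _ : Fin n => Finset.Icc 1 M).filter
      (fun η => IsAdmissible n η ∧ ¬ Nat.Prime (∑ i, η i)) with hS
  -- key cardinality bound
  have key : (S (m+1)).card ≤ T * (S m).card := by
    have h1 : (S (m+1)).card ≤ T * ((S (m+1)).image (fun η => Fin.init η)).card := by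
      apply Finset.card_le_mul_card_image
      intro b hb
      -- fiber over b injects into the j-set for k = ∑ b
      obtain ⟨η₀, hη₀, hb0⟩ := Finset.mem_image.mp hb
      have hη₀' := Finset.mem_filter.mp hη₀
      have hpi := Fintype.mem_piFinset.mp hη₀'.1
      -- bound k
      set k := ∑ i, b i with hk
      have hkmem : k ∈ Finset.Icc m (M * m) := by
        rw [Finset.mem_Icc]
        constructor
        · calc m = Finset.univ.card • 1 := by simp
            _ ≤ ∑ i : Fin m, b i := Finset.card_nsmul_le_sum _ _ _ (fun i _ => by
                have := hpi i.castSucc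
                rw [← hb0]
                exact (Finset.mem_Icc.mp this).1)
        · calc ∑ i : Fin m, b i ≤ Finset.univ.card • M := Finset.sum_le_card_nsmul _ _ _
                (fun i _ => by
                  have := hpi i.castSucc
                  rw [← hb0]
                  exact (Finset.mem_Icc.mp this).2)
            _ = M * m := by simp [Nat.mul_comm]
      calc ((S (m+1)).filter fun η => Fin.init η = b).card
          ≤ ((Finset.Icc 1 M).filter (fun j => ¬ Nat.Prime (k + j))).card := by
            apply Finset.card_le_card_of_injOn (fun η => η (Fin.last m))
            · intro η hη
              have hη' := Finset.mem_filter.mp hη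
              have hη'' := Finset.mem_filter.mp hη'.1
              have hpiη := Fintype.mem_piFinset.mp hη''.1
              rw [Finset.mem_coe, Finset.mem_filter]
              refine ⟨hpiη _, ?_⟩
              have hsum : ∑ i, η i = k + η (Fin.last m) := by
                rw [Fin.sum_univ_castSucc, hk, ← hη'.2]
                rfl
              rw [← hsum]
              exact hη''.2.2
            · intro η₁ h₁ η₂ h₂ hlast
              have e₁ := (Finset.mem_filter.mp h₁).2
              have e₂ := (Finset.mem_filter.mp h₂).2
              rw [← Fin.snoc_init_self η₁, ← Fin.snoc_init_self η₂, e₁, e₂]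
              exact congrArg _ hlast
          _ ≤ T := Finset.le_sup' (fun k => ((Finset.Icc 1 M).filter (fun j => ¬ Nat.Prime (k + j))).card) hkmem
    refine h1.trans (Nat.mul_le_mul_left T ?_)
    apply Finset.card_le_card
    intro b hb
    obtain ⟨η, hη, rfl⟩ := Finset.mem_image.mp hb
    have hη' := Finset.mem_filter.mp hη
    have hpi := Fintype.mem_piFinset.mp hη'.1
    rw [hS, Finset.mem_filter]
    refine ⟨Fintype.mem_piFinset.mpr fun i => hpi i.castSucc, ?_, ?_⟩
    · intro ℓ h1ℓ hℓm
      have := hη'.2.1 ℓ h1ℓ (by omega)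
      rwa [sum_filter_castSucc m ℓ (by omega)] at this
    · have := hη'.2.1 m hm (by omega)
      have heq : ∑ i ∈ Finset.univ.filter (fun i : Fin (m+1) => (i : ℕ) < m), η i
          = ∑ i : Fin m, Fin.init η i := by
        rw [sum_filter_castSucc m m le_rfl]
        apply Finset.sum_congr
        · ext i; simp [i.isLt]
        · intros; rfl
      rwa [heq] at this
  -- now real arithmetic
  have hM0 : (0:ℝ) < M := by exact_mod_cast hM
  rw [PrN, PrN]
  rw [div_le_iff₀ (by positivity)]
  have expand : (↑(S m).card) / (M:ℝ) ^ m * ((T:ℝ) / M) * (M:ℝ) ^ (m+1)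
      = (T * (S m).card : ℕ) := by
    push_cast
    field_simp
    ring
  rw [expand]
  exact_mod_cast key
end
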